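/- arXiv:1308.1835 — 2 statements merged into one kernel-verified Lean document; each statement's English description precedes it below -/
import Mathlib

section
/- Let H ∈ (1/2, 1) and let s, r > 0 with s ≠ r. Then ∫_{-∞}^{min(s,r)} (s−x)^{H/2−1} (r−x)^{H/2−1} dx = B(1−H, H/2) · |s−r|^{H−1}, where B denotes the Beta function. -/
open MeasureTheory Real

/-- The Euler Beta function `B(a,b) = Γ(a)Γ(b)/Γ(a+b)`. -/
noncomputable def realBeta (a b : ℝ) : ℝ := Gamma a * Gamma b / Gamma (a + b)

lemma realBeta_symm (a b : ℝ) : realBeta a b = realBeta b a := by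
  unfold realBeta; rw [mul_comm, add_comm]

lemma betaIntegral_real {p q : ℝ} (hp : 0 < p) (hq : 0 < q) :
    ∫ x in Set.Ioo (0:ℝ) 1, x ^ (p - 1) * (1 - x) ^ (q - 1) = realBeta p q := by
  have key := Complex.Gamma_mul_Gamma_eq_betaIntegral (s := (p : ℂ)) (t := (q : ℂ))
    (by simpa using hp) (by simpa using hq)
  have hbeta : Complex.betaIntegral (p : ℂ) (q : ℂ) =
      ((∫ x in Set.Ioo (0:ℝ) 1, x ^ (p - 1) * (1 - x) ^ (q - 1) : ℝ) : ℂ) := by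
    rw [Complex.betaIntegral, intervalIntegral.integral_of_le zero_le_one,
      MeasureTheory.integral_Ioc_eq_integral_Ioo]
    rw [show ((∫ x in Set.Ioo (0:ℝ) 1, x ^ (p - 1) * (1 - x) ^ (q - 1) : ℝ) : ℂ)
        = ∫ x in Set.Ioo (0:ℝ) 1, ((x ^ (p - 1) * (1 - x) ^ (q - 1) : ℝ) : ℂ) from
      (integral_ofReal).symm]
    refine setIntegral_congr_fun measurableSet_Ioo fun x hx => ?_
    obtain ⟨hx0, hx1⟩ := hx
    rw [Complex.ofReal_mul, Complex.ofReal_cpow hx0.le, Complex.ofReal_cpow (by linarith : (0:ℝ) ≤ 1 - x)]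
    push_cast
    ring
  rw [hbeta] at key
  rw [Complex.Gamma_ofReal, Complex.Gamma_ofReal, show (p : ℂ) + (q : ℂ) = ((p + q : ℝ) : ℂ) by
    push_cast; ring, Complex.Gamma_ofReal, ← Complex.ofReal_mul, ← Complex.ofReal_mul] at key
  have key' := Complex.ofReal_inj.mp key
  have hG : Real.Gamma (p + q) ≠ 0 := (Real.Gamma_pos_of_pos (by linarith)).ne'
  rw [realBeta, eq_div_iff hG]
  linarith [key']

lemma statement0_aux (H : ℝ) (hH : H ∈ Set.Ioo (1/2 : ℝ) 1)
    (s r : ℝ) (hlt : s < r) :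
    ∫ x in Set.Iio s, (s - x) ^ (H/2 - 1) * (r - x) ^ (H/2 - 1) =
      realBeta (1 - H) (H/2) * (r - s) ^ (H - 1) := by
  obtain ⟨hH1, hH2⟩ := hH
  set a : ℝ := H/2 - 1 with ha
  set c : ℝ := r - s with hcdef
  have hc : 0 < c := by simp [hcdef]; linarith
  set f : ℝ → ℝ := fun y => s - c * (y / (1 - y)) with hf
  set f' : ℝ → ℝ := fun y => -(c / (1 - y) ^ 2) with hf'
  have hder : ∀ y ∈ Set.Ioo (0:ℝ) 1, HasDerivWithinAt f (f' y) (Set.Ioo 0 1) y := by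
    intro y hy
    have h1y : (1 : ℝ) - y ≠ 0 := by have := hy.2; intro h; linarith [sub_eq_zero.mp h]
    have h1 : HasDerivAt (fun y : ℝ => y / (1 - y))
        ((1 * (1 - y) - y * (0 - 1)) / (1 - y) ^ 2) y :=
      (hasDerivAt_id y).div ((hasDerivAt_const y (1:ℝ)).sub (hasDerivAt_id y)) h1y
    have h2 : HasDerivAt f (-(c * ((1 * (1 - y) - y * (0 - 1)) / (1 - y) ^ 2))) y :=
      (h1.const_mul c).const_sub s
    have : -(c * ((1 * (1 - y) - y * (0 - 1)) / (1 - y) ^ 2)) = f' y := by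
      simp only [hf']
      field_simp
      ring
    rw [this] at h2
    exact h2.hasDerivWithinAt
  have hinj : Set.InjOn f (Set.Ioo 0 1) := by
    intro y1 h1 y2 h2 heq
    have e1 : (1:ℝ) - y1 ≠ 0 := by have := h1.2; intro h; linarith [sub_eq_zero.mp h]
    have e2 : (1:ℝ) - y2 ≠ 0 := by have := h2.2; intro h; linarith [sub_eq_zero.mp h]
    have : c * (y1 / (1 - y1)) = c * (y2 / (1 - y2)) := by
      simp only [hf] at heq; linarith
    have h3 : y1 / (1 - y1) = y2 / (1 - y2) := by
      exact mul_left_cancel₀ hc.ne' this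
    field_simp at h3
    linarith
  have himg : f '' Set.Ioo 0 1 = Set.Iio s := by
    ext x
    constructor
    · rintro ⟨y, hy, rfl⟩
      have h1y : 0 < 1 - y := by linarith [hy.2]
      have : 0 < c * (y / (1 - y)) := mul_pos hc (div_pos hy.1 h1y)
      simp only [hf, Set.mem_Iio]
      linarith
    · intro hx
      simp only [Set.mem_Iio] at hx
      refine ⟨(s - x) / (c + (s - x)), ⟨?_, ?_⟩, ?_⟩
      · apply div_pos (by linarith) (by linarith)
      · rw [div_lt_one (by linarith)]; linarith
      · have hdpos : 0 < c + (s - x) := by linarith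
        have hden : c + (s - x) ≠ 0 := hdpos.ne'
        simp only [hf]
        have h1 : (1 : ℝ) - (s - x) / (c + (s - x)) = c / (c + (s - x)) := by
          field_simp
          ring
        rw [h1]
        have h2 : (s - x) / (c + (s - x)) / (c / (c + (s - x))) = (s - x) / c := by
          field_simp
        rw [h2]
        field_simp
        ring
  rw [← himg, MeasureTheory.integral_image_eq_integral_abs_deriv_smul measurableSet_Ioo hder hinj]
  have hcongr : ∀ y ∈ Set.Ioo (0:ℝ) 1,
      |f' y| • ((s - f y) ^ a * (r - f y) ^ a) =
      c ^ (H - 1) * (y ^ (H/2 - 1) * (1 - y) ^ ((1 - H) - 1)) := by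
    intro y hy
    obtain ⟨hy0, hy1⟩ := hy
    have h1y : 0 < 1 - y := by linarith
    have habs : |f' y| = c / (1 - y) ^ 2 := by
      simp only [hf', abs_neg]
      exact abs_of_pos (by positivity)
    have hsf : s - f y = c * (y / (1 - y)) := by simp only [hf]; ring
    have hrf : r - f y = c / (1 - y) := by
      simp only [hf, hcdef]
      field_simp
      ring
    rw [habs, hsf, hrf, smul_eq_mul]
    rw [Real.mul_rpow hc.le (by positivity), Real.div_rpow hy0.le h1y.le,
      Real.div_rpow hc.le h1y.le]
    have hc1 : c ^ (H - 1) = c * (c ^ a * c ^ a) := by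
      rw [show H - 1 = 1 + (a + a) by rw [ha]; ring, Real.rpow_add hc, Real.rpow_one,
        Real.rpow_add hc]
    have hu1 : (1 - y) ^ ((1 - H) - 1) = ((1 - y) ^ (2:ℕ) * ((1 - y) ^ a * (1 - y) ^ a))⁻¹ := by
      rw [show (1 - H) - 1 = -(((2:ℕ):ℝ) + (a + a)) by rw [ha]; push_cast; ring,
        Real.rpow_neg h1y.le, Real.rpow_add h1y, Real.rpow_add h1y, Real.rpow_natCast]
    rw [hc1, hu1, show y ^ (H/2 - 1) = y ^ a by rw [ha]]
    have hya : y ^ a ≠ 0 := by positivity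
    have hua : (1 - y) ^ a ≠ 0 := by positivity
    field_simp
  rw [setIntegral_congr_fun measurableSet_Ioo hcongr, MeasureTheory.integral_const_mul,
    betaIntegral_real (by linarith) (by linarith), realBeta_symm]
  ring

theorem statement0 (H : ℝ) (hH : H ∈ Set.Ioo (1/2 : ℝ) 1)
    (s r : ℝ) (hs : 0 < s) (hr : 0 < r) (hsr : s ≠ r) :
    ∫ x in Set.Iio (min s r), (s - x) ^ (H/2 - 1) * (r - x) ^ (H/2 - 1) =
      realBeta (1 - H) (H/2) * |s - r| ^ (H - 1) := by
  rcases lt_or_gt_of_ne hsr with h | h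
  · rw [min_eq_left h.le, abs_sub_comm, abs_of_pos (by linarith)]
    exact statement0_aux H hH s r h
  · rw [min_eq_right h.le, abs_of_pos (by linarith)]
    have := statement0_aux H hH r s h
    rw [← this]
    refine setIntegral_congr_fun measurableSet_Iio fun x _ => ?_
    ring
end

section
/- Let H ∈ (1/2, 1), t > 0 and let ξ : ℝ → ℝ be a Schwartz function. Then ∫_{ℝ²} f_t(x₁,x₂) ξ(x₁) ξ(x₂) dx₁ dx₂ = d(H) ∫₀ᵗ ( I₊^{H/2}(ξ)(s) )² ds. -/
open MeasureTheory Real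

/-- `y₊^a`: equals `y^a` if `y > 0` and `0` otherwise. -/
noncomputable def posPow (y a : ℝ) : ℝ := if 0 < y then y ^ a else 0

/-- The normalizing constant `c(H) = √(H(2H−1)/2) / B(1−H, H/2)`. -/
noncomputable def cH (H : ℝ) : ℝ := Real.sqrt (H * (2*H - 1) / 2) / realBeta (1 - H) (H/2)

/-- The constant `d(H) = c(H) Γ(H/2)²`. -/
noncomputable def dH (H : ℝ) : ℝ := cH H * (Gamma (H/2))^2

/-- The Rosenblatt kernel `f_t(x₁,x₂) = c(H) ∫₀ᵗ (s−x₁)₊^{H/2−1} (s−x₂)₊^{H/2−1} ds`. -/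
noncomputable def rosKernel (H t x₁ x₂ : ℝ) : ℝ :=
  cH H * ∫ s in (0:ℝ)..t, posPow (s - x₁) (H/2 - 1) * posPow (s - x₂) (H/2 - 1)

/-- The Weyl fractional integral of order `α`:
`I₊^α(ξ)(x) = (1/Γ(α)) ∫_{-∞}^x (x−y)^{α−1} ξ(y) dy`. -/
noncomputable def weylInt (α : ℝ) (ξ : ℝ → ℝ) (x : ℝ) : ℝ :=
  (1 / Gamma α) * ∫ y in Set.Iio x, (x - y) ^ (α - 1) * ξ y

namespace RosAux

open Set Function

lemma measurable_posPow (a : ℝ) : Measurable fun y : ℝ => posPow y a := by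
  unfold posPow
  exact Measurable.ite measurableSet_Ioi (by measurability) measurable_const

lemma posPow_nonneg (y a : ℝ) : 0 ≤ posPow y a := by
  unfold posPow
  split
  · exact Real.rpow_nonneg (le_of_lt (by assumption)) _
  · exact le_refl 0

lemma posPow_of_pos {y : ℝ} (hy : 0 < y) (a : ℝ) : posPow y a = y ^ a := if_pos hy

lemma posPow_of_nonpos {y : ℝ} (hy : y ≤ 0) (a : ℝ) : posPow y a = 0 := if_neg (not_lt.2 hy)

lemma posPow_le_one {y a : ℝ} (hy : 1 ≤ y) (ha : a ≤ 0) : posPow y a ≤ 1 := by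
  rw [posPow_of_pos (lt_of_lt_of_le one_pos hy)]
  exact Real.rpow_le_one_of_one_le_of_nonpos hy ha

/-- The elementary kernel times the test function. -/
noncomputable def uu (a : ℝ) (ξ : ℝ → ℝ) (s x : ℝ) : ℝ := posPow (s - x) a * ξ x

/-- The majorant. -/
noncomputable def mm (a : ℝ) (ξ : ℝ → ℝ) (B s x : ℝ) : ℝ :=
  B * (Ioo (s-1) s).indicator (fun x => (s - x) ^ a) x + |ξ x|

lemma uu_measurable (a : ℝ) (ξ : SchwartzMap ℝ ℝ) (s : ℝ) :
    Measurable (uu a ξ s) :=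
  ((measurable_posPow a).comp (measurable_const.sub measurable_id)).mul
    ξ.continuous.measurable

lemma rpow_integrableOn (a : ℝ) (ha1 : -1 < a) (s : ℝ) :
    IntegrableOn (fun x => (s - x) ^ a) (Ioo (s-1) s) := by
  have h := (intervalIntegral.intervalIntegrable_rpow' (a := (0:ℝ)) (b := 1) ha1).comp_sub_left s
  simp only [sub_zero] at h
  rw [← intervalIntegrable_iff_integrableOn_Ioo_of_le (by linarith)]
  exact h.symm

lemma mm_nonneg (a : ℝ) (ξ : ℝ → ℝ) (B : ℝ) (hB : 0 ≤ B) (s x : ℝ) :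
    0 ≤ mm a ξ B s x := by
  unfold mm
  refine add_nonneg (mul_nonneg hB ?_) (abs_nonneg _)
  refine Set.indicator_nonneg (fun y hy => ?_) x
  exact Real.rpow_nonneg (by have := hy.2; linarith) _

lemma mm_integrable (a : ℝ) (ha1 : -1 < a) (ξ : SchwartzMap ℝ ℝ) (B s : ℝ) :
    Integrable (mm a ξ B s) := by
  unfold mm
  exact (((rpow_integrableOn a ha1 s).integrable_indicator measurableSet_Ioo).const_mul B).add
    ξ.integrable.abs

lemma mm_integral (a : ℝ) (ha1 : -1 < a) (ξ : SchwartzMap ℝ ℝ) (B s : ℝ) :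
    ∫ x, mm a ξ B s x = B * (1/(a+1)) + ∫ x, |ξ x| := by
  unfold mm
  rw [integral_add (((rpow_integrableOn a ha1 s).integrable_indicator measurableSet_Ioo).const_mul B)
    ξ.integrable.abs, integral_const_mul, integral_indicator measurableSet_Ioo]
  have h1 : ∫ x in Ioo (s-1) s, (s - x) ^ a = ∫ x in (s-1)..s, (s - x) ^ a := by
    rw [intervalIntegral.integral_of_le (by linarith), integral_Ioc_eq_integral_Ioo]
  have h2 : ∫ x in (s-1)..s, (s - x) ^ a = ∫ x in (0:ℝ)..1, x ^ a := by
    rw [intervalIntegral.integral_comp_sub_left (fun x => x ^ a) s]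
    norm_num
  have h3 : ∫ x in (0:ℝ)..1, x ^ a = 1/(a+1) := by
    rw [integral_rpow (Or.inl ha1), Real.one_rpow, Real.zero_rpow (by linarith)]
    ring
  rw [h1, h2, h3]

lemma uu_le_mm (a : ℝ) (ha0 : a ≤ 0) (ξ : SchwartzMap ℝ ℝ) (B : ℝ)
    (hB : ∀ x, |ξ x| ≤ B) (s x : ℝ) : |uu a ξ s x| ≤ mm a ξ B s x := by
  have hξ0 : 0 ≤ |ξ x| := abs_nonneg _
  have hB0 : 0 ≤ B := le_trans hξ0 (hB x)
  have hind : 0 ≤ B * (Ioo (s-1) s).indicator (fun x => (s - x) ^ a) x := by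
    refine mul_nonneg hB0 (Set.indicator_nonneg (fun y hy => ?_) x)
    exact Real.rpow_nonneg (by have := hy.2; linarith) _
  rcases le_or_gt s x with h | h
  · rw [uu, posPow_of_nonpos (by linarith), zero_mul, abs_zero]
    exact add_nonneg hind hξ0
  · rw [uu, abs_mul, abs_of_nonneg (posPow_nonneg _ _)]
    rcases le_or_gt x (s-1) with h1 | h1
    · have : posPow (s - x) a * |ξ x| ≤ 1 * |ξ x| :=
        mul_le_mul_of_nonneg_right (posPow_le_one (by linarith) ha0) hξ0
      rw [one_mul] at this
      unfold mm
      linarith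
    · have hx : x ∈ Ioo (s-1) s := ⟨h1, h⟩
      unfold mm
      rw [Set.indicator_of_mem hx]
      have hp : posPow (s - x) a = (s - x) ^ a := posPow_of_pos (by linarith) _
      have : posPow (s - x) a * |ξ x| ≤ (s - x) ^ a * B := by
        rw [hp]
        exact mul_le_mul_of_nonneg_left (hB x) (Real.rpow_nonneg (by linarith) _)
      linarith [this]

lemma uu_integrable (a : ℝ) (ha1 : -1 < a) (ha0 : a ≤ 0) (ξ : SchwartzMap ℝ ℝ)
    (B : ℝ) (hB : ∀ x, |ξ x| ≤ B) (s : ℝ) : Integrable (uu a ξ s) := by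
  refine (mm_integrable a ha1 ξ B s).mono (uu_measurable a ξ s).aestronglyMeasurable
    (ae_of_all _ fun x => ?_)
  rw [Real.norm_eq_abs, Real.norm_eq_abs]
  exact le_trans (uu_le_mm a ha0 ξ B hB s x) (le_abs_self _)

lemma uu_lintegral_le (a : ℝ) (ha1 : -1 < a) (ha0 : a ≤ 0) (ξ : SchwartzMap ℝ ℝ)
    (B : ℝ) (hB : ∀ x, |ξ x| ≤ B) (s : ℝ) :
    ∫⁻ x, ENNReal.ofReal |uu a ξ s x| ≤ ENNReal.ofReal (B * (1/(a+1)) + ∫ x, |ξ x|) := by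
  have hB0 : 0 ≤ B := le_trans (abs_nonneg _) (hB 0)
  calc ∫⁻ x, ENNReal.ofReal |uu a ξ s x|
      ≤ ∫⁻ x, ENNReal.ofReal (mm a ξ B s x) :=
        lintegral_mono fun x => ENNReal.ofReal_le_ofReal (uu_le_mm a ha0 ξ B hB s x)
    _ = ENNReal.ofReal (∫ x, mm a ξ B s x) :=
        (ofReal_integral_eq_lintegral_ofReal (mm_integrable a ha1 ξ B s)
          (ae_of_all _ (mm_nonneg a ξ B hB0 s))).symm
    _ = ENNReal.ofReal (B * (1/(a+1)) + ∫ x, |ξ x|) := by rw [mm_integral a ha1 ξ B s]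

lemma key_integrable (a : ℝ) (ha1 : -1 < a) (ha0 : a ≤ 0) (ξ : SchwartzMap ℝ ℝ)
    (B : ℝ) (hB : ∀ x, |ξ x| ≤ B) (t : ℝ) :
    Integrable (Function.uncurry fun (p : ℝ × ℝ) (s : ℝ) => uu a ξ s p.1 * uu a ξ s p.2)
      ((volume : Measure (ℝ × ℝ)).prod (volume.restrict (Ioc 0 t))) := by
  have m1 : Measurable fun q : (ℝ × ℝ) × ℝ => uu a ξ q.2 q.1.1 :=
    ((measurable_posPow a).comp (measurable_snd.sub (measurable_fst.fst))).mul
      (ξ.continuous.measurable.comp measurable_fst.fst)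
  have m2 : Measurable fun q : (ℝ × ℝ) × ℝ => uu a ξ q.2 q.1.2 :=
    ((measurable_posPow a).comp (measurable_snd.sub (measurable_fst.snd))).mul
      (ξ.continuous.measurable.comp measurable_fst.snd)
  have mF : Measurable (Function.uncurry fun (p : ℝ × ℝ) (s : ℝ) => uu a ξ s p.1 * uu a ξ s p.2) :=
    m1.mul m2
  refine ⟨mF.aestronglyMeasurable, ?_⟩
  rw [hasFiniteIntegral_iff_norm]
  set C := ENNReal.ofReal (B * (1/(a+1)) + ∫ x, |ξ x|) with hC
  have hmeas : AEMeasurable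
      (fun q : (ℝ × ℝ) × ℝ => ENNReal.ofReal ‖uu a ξ q.2 q.1.1 * uu a ξ q.2 q.1.2‖)
      (((volume : Measure (ℝ × ℝ)).prod (volume.restrict (Ioc 0 t)))) :=
    (ENNReal.measurable_ofReal.comp mF.norm).aemeasurable
  calc ∫⁻ q, ENNReal.ofReal ‖Function.uncurry (fun (p : ℝ × ℝ) (s : ℝ) => uu a ξ s p.1 * uu a ξ s p.2) q‖
        ∂((volume : Measure (ℝ × ℝ)).prod (volume.restrict (Ioc 0 t)))
      = ∫⁻ s, ∫⁻ p : ℝ × ℝ, ENNReal.ofReal ‖uu a ξ s p.1 * uu a ξ s p.2‖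
          ∂volume ∂(volume.restrict (Ioc 0 t)) := lintegral_prod_symm _ hmeas
    _ ≤ ∫⁻ _ : ℝ, C * C ∂(volume.restrict (Ioc 0 t)) := by
        refine lintegral_mono fun s => ?_
        have heq : ∀ p : ℝ × ℝ, ENNReal.ofReal ‖uu a ξ s p.1 * uu a ξ s p.2‖
            = ENNReal.ofReal |uu a ξ s p.1| * ENNReal.ofReal |uu a ξ s p.2| := by
          intro p
          rw [Real.norm_eq_abs, abs_mul, ENNReal.ofReal_mul (abs_nonneg _)]
        rw [lintegral_congr heq, Measure.volume_eq_prod]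
        rw [lintegral_prod_mul (f := fun x => ENNReal.ofReal |uu a ξ s x|)
          (g := fun x => ENNReal.ofReal |uu a ξ s x|)
          ((uu_measurable a ξ s).abs.ennreal_ofReal).aemeasurable
          ((uu_measurable a ξ s).abs.ennreal_ofReal).aemeasurable]
        exact mul_le_mul' (uu_lintegral_le a ha1 ha0 ξ B hB s) (uu_lintegral_le a ha1 ha0 ξ B hB s)
    _ < ⊤ := by
        rw [lintegral_const, Measure.restrict_apply_univ]
        exact ENNReal.mul_lt_top (ENNReal.mul_lt_top ENNReal.ofReal_lt_top ENNReal.ofReal_lt_top)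
          measure_Ioc_lt_top

end RosAux

open RosAux Set

theorem statement4 (H : ℝ) (hH : H ∈ Set.Ioo (1/2 : ℝ) 1) (t : ℝ) (ht : 0 < t)
    (ξ : SchwartzMap ℝ ℝ) :
    ∫ p : ℝ × ℝ, rosKernel H t p.1 p.2 * ξ p.1 * ξ p.2 =
      dH H * ∫ s in (0:ℝ)..t, (weylInt (H/2) ξ s)^2 := by
  obtain ⟨hH1, hH2⟩ := hH
  have ha1 : -1 < H/2 - 1 := by linarith
  have ha0 : H/2 - 1 ≤ 0 := by linarith
  obtain ⟨B, hBpos, hBd⟩ := ξ.decay 0 0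
  have hB : ∀ x, |ξ x| ≤ B := fun x => by
    have := hBd x
    simpa [norm_iteratedFDeriv_zero, Real.norm_eq_abs] using this
  have hGamma : Gamma (H/2) ≠ 0 := ne_of_gt (Gamma_pos_of_pos (by linarith))
  have step1 : ∀ p : ℝ × ℝ, rosKernel H t p.1 p.2 * ξ p.1 * ξ p.2
      = cH H * ∫ s in Ioc (0:ℝ) t, uu (H/2-1) ξ s p.1 * uu (H/2-1) ξ s p.2 := by
    intro p
    rw [rosKernel, intervalIntegral.integral_of_le ht.le]
    have hI : (∫ s in Ioc (0:ℝ) t, posPow (s - p.1) (H/2-1) * posPow (s - p.2) (H/2-1))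
        * (ξ p.1 * ξ p.2)
        = ∫ s in Ioc (0:ℝ) t, uu (H/2-1) ξ s p.1 * uu (H/2-1) ξ s p.2 := by
      rw [← integral_mul_const]
      congr 1
      funext s
      simp only [uu]
      ring
    calc cH H * (∫ s in Ioc (0:ℝ) t, posPow (s - p.1) (H/2-1) * posPow (s - p.2) (H/2-1))
          * ξ p.1 * ξ p.2
        = cH H * ((∫ s in Ioc (0:ℝ) t, posPow (s - p.1) (H/2-1) * posPow (s - p.2) (H/2-1))
          * (ξ p.1 * ξ p.2)) := by ring
      _ = cH H * ∫ s in Ioc (0:ℝ) t, uu (H/2-1) ξ s p.1 * uu (H/2-1) ξ s p.2 := by rw [hI]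
  rw [show (∫ p : ℝ × ℝ, rosKernel H t p.1 p.2 * ξ p.1 * ξ p.2)
      = ∫ p : ℝ × ℝ, cH H * ∫ s in Ioc (0:ℝ) t, uu (H/2-1) ξ s p.1 * uu (H/2-1) ξ s p.2 from
      integral_congr_ae (Filter.Eventually.of_forall step1)]
  rw [integral_const_mul]
  rw [integral_integral_swap (key_integrable (H/2-1) ha1 ha0 ξ B hB t)]
  have step2 : ∀ s : ℝ, (∫ p : ℝ × ℝ, uu (H/2-1) ξ s p.1 * uu (H/2-1) ξ s p.2)
      = (Gamma (H/2))^2 * (weylInt (H/2) ξ s)^2 := by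
    intro s
    rw [Measure.volume_eq_prod, integral_prod_mul]
    have key : ∫ x, uu (H/2-1) ξ s x = Gamma (H/2) * weylInt (H/2) ξ s := by
      have h0 : ∫ x, uu (H/2-1) ξ s x = ∫ y in Iio s, (s - y) ^ (H/2 - 1) * ξ y := by
        rw [← setIntegral_eq_integral_of_forall_compl_eq_zero
          (s := Iio s) (f := uu (H/2-1) ξ s) ?_]
        · exact setIntegral_congr_fun measurableSet_Iio (fun x hx => by
            rw [uu, posPow_of_pos (sub_pos.2 hx)])
        · intro x hx
          simp only [Set.mem_Iio, not_lt] at hx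
          rw [uu, posPow_of_nonpos (by linarith), zero_mul]
      rw [weylInt, ← mul_assoc, mul_one_div, div_self hGamma, one_mul, h0]
    rw [key]
    ring
  rw [integral_congr_ae (Filter.Eventually.of_forall step2), integral_const_mul]
  rw [dH, intervalIntegral.integral_of_le ht.le]
  ring
end
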